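/- arXiv:1001.2495 — 5 statements merged into one kernel-verified Lean document; each statement's English description precedes it below -/
import Mathlib

section
/- Let A, B ⊆ ℕ and let N be a natural number. Write |C|_a^b for the cardinality of C ∩ (a, b], and let Υ(C, D; N) denote the number of quadruples (c₁, c₂, d₁, d₂) with c₁, c₂ ∈ C ∩ (2N, 3N], d₁, d₂ ∈ D ∩ (0, N] and c₁ - d₁ = c₂ - d₂. Then (|B|_0^N · |ℕ \ (A+B)|_{2N}^{3N})² ≤ |ℕ \ A|_N^{3N} · Υ(ℕ \ (A+B), B; N). -/
/-!
Every pair `(c, d)` with `c ∈ C := (A + B)ᶜ ∩ (2N, 3N]` and `d ∈ D := B ∩ (0, N]` has its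
difference `c - d` in `Aᶜ ∩ (N, 3N]`, since `c - d ∈ A` would put `c` in `A + B`. Cauchy–Schwarz
over the fibres of `(c, d) ↦ c - d` bounds `(|C| |D|)²` by the number of possible differences
times the number of pairs of pairs with equal difference, which is `Υ((A + B)ᶜ, B; N)`.
-/

open Pointwise

open Finset in
theorem Finset.sq_card_le_card_mul_card_filter_eq {α β : Type*} [DecidableEq β]
    {s : Finset α} {t : Finset β} {f : α → β} (hf : Set.MapsTo f s t) :
    #s ^ 2 ≤ #t * #{p ∈ s ×ˢ s | f p.1 = f p.2} :=
  calc #s ^ 2 = (∑ b ∈ t, #{a ∈ s | f a = b}) ^ 2 := by rw [card_eq_sum_card_fiberwise hf]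
    _ ≤ #t * ∑ b ∈ t, #{a ∈ s | f a = b} ^ 2 := sq_sum_le_card_mul_sum_sq
    _ = #t * #{p ∈ s ×ˢ s | f p.1 = f p.2} := by
      rw [card_eq_sum_card_fiberwise (f := fun p => f p.1) (t := t)
        fun p hp => hf (mem_product.1 (mem_filter.1 hp).1).1]
      congr 1
      refine sum_congr rfl fun b _ => ?_
      rw [sq, ← card_product]
      congr 1
      ext ⟨x, y⟩
      simp only [mem_product, mem_filter]
      grind

theorem Set.ncard_sq_le_ncard_mul_ncard_fiber_pairs {α β : Type*} {s : Set α} {t : Set β}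
    {f : α → β} (ht : t.Finite) (hf : MapsTo f s t) :
    s.ncard ^ 2 ≤ t.ncard * {p : α × α | p.1 ∈ s ∧ p.2 ∈ s ∧ f p.1 = f p.2}.ncard := by
  classical
  rcases s.finite_or_infinite with hs | hs
  · lift s to Finset α using hs
    lift t to Finset β using ht
    have hpairs : {p : α × α | p.1 ∈ (s : Set α) ∧ p.2 ∈ (s : Set α) ∧ f p.1 = f p.2}
        = ↑({p ∈ s ×ˢ s | f p.1 = f p.2} : Finset (α × α)) := by
      ext; simp [and_assoc]
    rw [hpairs, ncard_coe_finset, ncard_coe_finset, ncard_coe_finset]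
    exact Finset.sq_card_le_card_mul_card_filter_eq hf
  · simp [hs.ncard]

theorem tsub_notMem_of_notMem_add {α : Type*} [AddCommMonoid α] [PartialOrder α]
    [CanonicallyOrderedAdd α] [Sub α] [OrderedSub α] {A B : Set α} {b c : α}
    (hc : c ∉ A + B) (hb : b ∈ B) (hbc : b ≤ c) : c - b ∉ A :=
  fun ha => hc ⟨c - b, ha, b, hb, tsub_add_cancel_of_le hbc⟩

/-- Theorem 1.1:
`(|B|₀^N · |complement of (A+B)|_{2N}^{3N})² ≤ |complement of A|_N^{3N} · Υ(complement of (A+B), B; N)`. -/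
theorem stmt_1 (A B : Set ℕ) (N : ℕ) :
    ((B ∩ Set.Ioc 0 N).ncard * (((A + B)ᶜ : Set ℕ) ∩ Set.Ioc (2 * N) (3 * N)).ncard) ^ 2
      ≤ ((Aᶜ : Set ℕ) ∩ Set.Ioc N (3 * N)).ncard *
        {q : ℕ × ℕ × ℕ × ℕ |
          q.1 ∈ ((A + B)ᶜ : Set ℕ) ∩ Set.Ioc (2 * N) (3 * N) ∧
          q.2.1 ∈ ((A + B)ᶜ : Set ℕ) ∩ Set.Ioc (2 * N) (3 * N) ∧
          q.2.2.1 ∈ B ∩ Set.Ioc 0 N ∧ q.2.2.2 ∈ B ∩ Set.Ioc 0 N ∧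
          q.1 - q.2.2.1 = q.2.1 - q.2.2.2}.ncard := by
  set C := ((A + B)ᶜ : Set ℕ) ∩ Set.Ioc (2 * N) (3 * N)
  set D := B ∩ Set.Ioc 0 N
  have hdiff : Set.MapsTo (fun p : ℕ × ℕ => p.1 - p.2) (C ×ˢ D)
      ((Aᶜ : Set ℕ) ∩ Set.Ioc N (3 * N)) := by
    rintro ⟨c, d⟩ ⟨⟨hc, hc2N, hc3N⟩, hd, hd0, hdN⟩
    exact ⟨tsub_notMem_of_notMem_add hc hd (by omega), by dsimp only; omega,
      by dsimp only; omega⟩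
  have key := Set.ncard_sq_le_ncard_mul_ncard_fiber_pairs
    ((Set.finite_Ioc _ _).inter_of_right _) hdiff
  let e := (Equiv.prodProdProdComm ℕ ℕ ℕ ℕ).trans (Equiv.prodAssoc ℕ ℕ (ℕ × ℕ))
  have hpairs :
      {p : (ℕ × ℕ) × ℕ × ℕ | p.1 ∈ C ×ˢ D ∧ p.2 ∈ C ×ˢ D ∧ p.1.1 - p.1.2 = p.2.1 - p.2.2}
        = e ⁻¹' {q | q.1 ∈ C ∧ q.2.1 ∈ C ∧ q.2.2.1 ∈ D ∧ q.2.2.2 ∈ D ∧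
            q.1 - q.2.2.1 = q.2.1 - q.2.2.2} := by
    ext
    simp only [Set.mem_ofPred_eq, Set.mem_preimage, Set.mem_prod, e, Equiv.trans_apply,
      Equiv.prodProdProdComm_apply, Equiv.prodAssoc_apply]
    tauto
  rwa [Set.ncard_prod, hpairs, Set.ncard_preimage_of_injective_subset_range e.injective
    (by simp), mul_comm C.ncard] at key
end

section
/- Let A, B ⊆ ℕ, let N be a natural number, and let Υ̂(C, D; N) denote the number of quadruples (c₁, c₂, d₁, d₂) with c₁, c₂ ∈ C ∩ (2N, 3N], d₁, d₂ ∈ D ∩ (0, N], c₁ - d₁ = c₂ - d₂ and c₁ ≠ c₂. Then either |B|_0^N · |ℕ \ (A+B)|_{2N}^{3N} ≤ 2·|ℕ \ A|_N^{3N}, or (|B|_0^N · |ℕ \ (A+B)|_{2N}^{3N})² ≤ 2·|ℕ \ A|_N^{3N} · Υ̂(ℕ \ (A+B), B; N). -/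
/-!
Every pair `(c, d)` with `c ∈ overline{A+B} ∩ (2N, 3N]` and `d ∈ B ∩ (0, N]` yields a difference
`c - d ∈ Ā ∩ (N, 3N]`. By Cauchy–Schwarz over these differences,
`(|B|·|overline{A+B}|)² ≤ |Ā| · #{(c₁, d₁, c₂, d₂) : c₁ - d₁ = c₂ - d₂}`, and the quadruples with
`c₁ = c₂` are exactly the `|B|·|overline{A+B}|` diagonal ones, the rest being counted by `Υ̂`.
Whichever of the two summands dominates gives one side of the dichotomy.
-/

open Pointwise Finset

theorem card_sq_le_card_mul_card_filter_apply_eq {ι κ : Type*} [DecidableEq κ]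
    {s : Finset ι} {t : Finset κ} {f : ι → κ} (hf : ∀ i ∈ s, f i ∈ t) :
    #s ^ 2 ≤ #t * #{p ∈ s ×ˢ s | f p.1 = f p.2} := by
  have hpairs : #{p ∈ s ×ˢ s | f p.1 = f p.2} = ∑ k ∈ t, #{i ∈ s | f i = k} ^ 2 := by
    rw [card_eq_sum_card_fiberwise (f := fun p => f p.1) (t := t)
      (fun p hp => hf _ (mem_product.1 (mem_filter.1 hp).1).1)]
    refine sum_congr rfl fun k _ => ?_
    rw [sq, ← card_product]
    congr 1
    ext ⟨i, j⟩
    simp only [mem_filter, mem_product]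
    constructor
    · rintro ⟨⟨⟨hi, hj⟩, hij⟩, rfl⟩
      exact ⟨⟨hi, rfl⟩, hj, hij.symm⟩
    · rintro ⟨⟨hi, rfl⟩, hj, hjk⟩
      exact ⟨⟨⟨hi, hj⟩, hjk.symm⟩, rfl⟩
  calc #s ^ 2 = (∑ k ∈ t, #{i ∈ s | f i = k}) ^ 2 := by rw [← card_eq_sum_card_fiberwise hf]
    _ ≤ #t * ∑ k ∈ t, #{i ∈ s | f i = k} ^ 2 := sq_sum_le_card_mul_sum_sq
    _ = #t * #{p ∈ s ×ˢ s | f p.1 = f p.2} := by rw [hpairs]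

/-- The quantity `Υ̂(C, D; N)` of the paper, for `C ⊆ (2N, 3N]` and `D ⊆ (0, N]`. -/
def diffCollisions (C D : Finset ℕ) : Finset (ℕ × ℕ × ℕ × ℕ) :=
  {q ∈ C ×ˢ C ×ˢ D ×ˢ D | q.1 - q.2.2.1 = q.2.1 - q.2.2.2 ∧ q.1 ≠ q.2.1}

theorem coe_diffCollisions (C D : Finset ℕ) :
    (diffCollisions C D : Set (ℕ × ℕ × ℕ × ℕ)) =
      {q | q.1 ∈ (C : Set ℕ) ∧ q.2.1 ∈ (C : Set ℕ) ∧ q.2.2.1 ∈ (D : Set ℕ) ∧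
        q.2.2.2 ∈ (D : Set ℕ) ∧ q.1 - q.2.2.1 = q.2.1 - q.2.2.2 ∧ q.1 ≠ q.2.1} := by
  ext q
  simp only [diffCollisions, coe_filter, mem_product, mem_coe, Set.mem_ofPred_eq, and_assoc]

theorem card_equalDiffPairs_eq_add_diffCollisions {C D : Finset ℕ}
    (hDC : ∀ c ∈ C, ∀ d ∈ D, d ≤ c) :
    #{p ∈ (C ×ˢ D) ×ˢ (C ×ˢ D) | p.1.1 - p.1.2 = p.2.1 - p.2.2} =
      #C * #D + #(diffCollisions C D) := by
  set S := {p ∈ (C ×ˢ D) ×ˢ (C ×ˢ D) | p.1.1 - p.1.2 = p.2.1 - p.2.2}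
  have hdiag : {p ∈ S | p.1.1 = p.2.1} = (C ×ˢ D).diag := by
    ext ⟨⟨c₁, d₁⟩, c₂, d₂⟩
    simp only [S, mem_filter, mem_product, mem_diag, Prod.mk.injEq]
    constructor
    · rintro ⟨⟨⟨⟨hc₁, hd₁⟩, -, hd₂⟩, hsub⟩, rfl⟩
      have := hDC c₁ hc₁ d₁ hd₁
      have := hDC c₁ hc₁ d₂ hd₂
      exact ⟨⟨hc₁, hd₁⟩, rfl, by omega⟩
    · rintro ⟨⟨hc₁, hd₁⟩, rfl, rfl⟩
      exact ⟨⟨⟨⟨hc₁, hd₁⟩, hc₁, hd₁⟩, rfl⟩, rfl⟩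
  have hoff : #{p ∈ S | p.1.1 ≠ p.2.1} = #(diffCollisions C D) := by
    refine card_nbij' (fun p => (p.1.1, p.2.1, p.1.2, p.2.2))
      (fun q => ((q.1, q.2.2.1), (q.2.1, q.2.2.2))) ?_ ?_ (fun _ _ => rfl) (fun _ _ => rfl)
    · rintro ⟨⟨c₁, d₁⟩, c₂, d₂⟩ hp
      simp only [S, diffCollisions, mem_coe, mem_filter, mem_product] at hp ⊢
      tauto
    · rintro ⟨c₁, c₂, d₁, d₂⟩ hq
      simp only [S, diffCollisions, mem_coe, mem_filter, mem_product] at hq ⊢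
      tauto
  rw [← card_filter_add_card_filter_not (fun p => p.1.1 = p.2.1), hdiag, diag_card,
    card_product, hoff]

theorem sq_card_mul_card_le {C D E : Finset ℕ} (hDC : ∀ c ∈ C, ∀ d ∈ D, d ≤ c)
    (hE : ∀ c ∈ C, ∀ d ∈ D, c - d ∈ E) :
    (#D * #C) ^ 2 ≤ #E * (#D * #C + #(diffCollisions C D)) := by
  have hCS := card_sq_le_card_mul_card_filter_apply_eq (s := C ×ˢ D) (t := E)
    (f := fun p => p.1 - p.2) fun p hp => hE _ (mem_product.1 hp).1 _ (mem_product.1 hp).2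
  rwa [card_equalDiffPairs_eq_add_diffCollisions hDC, card_product, mul_comm #C] at hCS

theorem le_two_mul_or_sq_le_two_mul_mul {x e u : ℕ} (h : x ^ 2 ≤ e * (x + u)) :
    x ≤ 2 * e ∨ x ^ 2 ≤ 2 * e * u := by
  by_contra! hx
  nlinarith [hx.1, hx.2]

theorem sub_notMem_of_notMem_add {A B : Set ℕ} {c d : ℕ} (hc : c ∉ A + B) (hd : d ∈ B)
    (hdc : d ≤ c) : c - d ∉ A :=
  fun hA => hc ⟨c - d, hA, d, hd, Nat.sub_add_cancel hdc⟩

/-- Theorem 7.1 (dichotomy): either `|B|₀^N · |overline{A+B}|_{2N}^{3N} ≤ 2|Ā|_N^{3N}`, or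
`(|B|₀^N · |overline{A+B}|_{2N}^{3N})² ≤ 2|Ā|_N^{3N} · Υ̂(overline{A+B}, B; N)`. -/
theorem stmt_2 (A B : Set ℕ) (N : ℕ) :
    (B ∩ Set.Ioc 0 N).ncard * (((A + B)ᶜ : Set ℕ) ∩ Set.Ioc (2 * N) (3 * N)).ncard
      ≤ 2 * ((Aᶜ : Set ℕ) ∩ Set.Ioc N (3 * N)).ncard ∨
    ((B ∩ Set.Ioc 0 N).ncard * (((A + B)ᶜ : Set ℕ) ∩ Set.Ioc (2 * N) (3 * N)).ncard) ^ 2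
      ≤ 2 * ((Aᶜ : Set ℕ) ∩ Set.Ioc N (3 * N)).ncard *
        {q : ℕ × ℕ × ℕ × ℕ |
          q.1 ∈ ((A + B)ᶜ : Set ℕ) ∩ Set.Ioc (2 * N) (3 * N) ∧
          q.2.1 ∈ ((A + B)ᶜ : Set ℕ) ∩ Set.Ioc (2 * N) (3 * N) ∧
          q.2.2.1 ∈ B ∩ Set.Ioc 0 N ∧ q.2.2.2 ∈ B ∩ Set.Ioc 0 N ∧
          q.1 - q.2.2.1 = q.2.1 - q.2.2.2 ∧ q.1 ≠ q.2.1}.ncard := by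
  have hC := (Set.finite_Ioc (2 * N) (3 * N)).inter_of_right ((A + B)ᶜ : Set ℕ)
  have hD := (Set.finite_Ioc 0 N).inter_of_right B
  have hE := (Set.finite_Ioc N (3 * N)).inter_of_right (Aᶜ : Set ℕ)
  rw [← hC.coe_toFinset, ← hD.coe_toFinset, ← hE.coe_toFinset, ← coe_diffCollisions]
  simp only [Set.ncard_coe_finset]
  refine le_two_mul_or_sq_le_two_mul_mul (sq_card_mul_card_le ?_ ?_)
  all_goals
    intro c hc d hd
    simp only [Set.Finite.mem_toFinset, Set.mem_inter_iff, Set.mem_compl_iff, Set.mem_Ioc] at hc hd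
  · omega
  · simp only [Set.Finite.mem_toFinset, Set.mem_inter_iff, Set.mem_compl_iff, Set.mem_Ioc]
    exact ⟨sub_notMem_of_notMem_add hc.1 hd.1 (by omega), by omega, by omega⟩
end

section
/- Let A ⊆ ℕ and let P be a set of primes of positive lower density in the primes, i.e. |P ∩ (0,N]| ≫ N/log N. Suppose there is δ > 0 with |ℕ \ A| ∩ (0, N]| ≤ N^{1-δ} for all large N. Suppose additionally that for all large N, the number of quadruples (n₁, n₂, p₁, p₂) with n₁, n₂ ∈ (ℕ \ (A+P)) ∩ (2N, 3N], p₁, p₂ ∈ P ∩ (0,N], n₁ - p₁ = n₂ - p₂ and n₁ ≠ n₂ is at most C·|ℕ\(A+P)|_{2N}^{3N}²·N(log log N)/(log N)². Then for all sufficiently large N, every element of (2N, 3N] lies in A + P, i.e. |ℕ \ (A+P)| ∩ (2N,3N]| = 0. -/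
open Pointwise

lemma cs_energy {α β : Type*} [DecidableEq β] (s : Finset α) (t : Finset β)
    (g : α → β) (h : ∀ x ∈ s, g x ∈ t) :
    (s.card : ℝ) ^ 2 ≤ (t.card : ℝ) *
      (((s ×ˢ s).filter (fun w => g w.1 = g w.2)).card : ℝ) := by
  classical
  have h1 : s.card = ∑ d ∈ t, (s.filter (fun x => g x = d)).card :=
    Finset.card_eq_sum_card_fiberwise h
  have h2 : ((s ×ˢ s).filter (fun w => g w.1 = g w.2)).card
      = ∑ d ∈ t, ((s.filter (fun x => g x = d)).card) ^ 2 := by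
    rw [Finset.card_eq_sum_card_fiberwise (f := fun w => g w.1) (t := t)
      (fun w hw => h w.1 (Finset.mem_product.mp (Finset.mem_filter.mp hw).1).1)]
    refine Finset.sum_congr rfl fun d _ => ?_
    rw [Finset.filter_filter]
    have he : ((s ×ˢ s).filter fun w => g w.1 = g w.2 ∧ g w.1 = d)
        = (s.filter fun x => g x = d) ×ˢ (s.filter fun x => g x = d) := by
      ext w
      simp only [Finset.mem_filter, Finset.mem_product]
      constructor
      · rintro ⟨⟨h1, h2⟩, h3, h4⟩; exact ⟨⟨h1, h4⟩, h2, h4 ▸ h3.symm⟩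
      · rintro ⟨⟨h1, h2⟩, h3, h4⟩; exact ⟨⟨h1, h3⟩, h2.trans h4.symm, h2⟩
    rw [he, Finset.card_product, sq]
  rw [h1, h2]
  push_cast
  exact sq_sum_le_card_mul_sum_sq

/-- asymptotic helper -/
lemma asymp_helper (c C δ : ℝ) (hc : 0 < c) (hC : 0 < C) (hδ : 0 < δ) :
    ∃ N₄ : ℕ, ∀ N : ℕ, N ≥ N₄ →
      2 * (3:ℝ) ^ ((1:ℝ) - δ) * Real.log N < c * (N:ℝ) ^ δ ∧
      2 * (3:ℝ) ^ ((1:ℝ) - δ) * C * Real.log (Real.log N) < c ^ 2 * (N:ℝ) ^ δ ∧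
      3 ≤ N := by
  have h3 : (0:ℝ) < (3:ℝ) ^ ((1:ℝ) - δ) := Real.rpow_pos_of_pos (by norm_num) _
  set ε : ℝ := min (c / (4 * (3:ℝ) ^ ((1:ℝ) - δ)))
      (c ^ 2 / (4 * (3:ℝ) ^ ((1:ℝ) - δ) * C)) with hε
  have hε0 : 0 < ε := lt_min (by positivity) (by positivity)
  have hlo := (isLittleO_log_rpow_atTop hδ).def hε0
  have hev : ∀ᶠ x : ℝ in Filter.atTop,
      2 * (3:ℝ) ^ ((1:ℝ) - δ) * Real.log x < c * x ^ δ ∧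
      2 * (3:ℝ) ^ ((1:ℝ) - δ) * C * Real.log (Real.log x) < c ^ 2 * x ^ δ := by
    filter_upwards [hlo, Filter.eventually_ge_atTop (3:ℝ)] with x hx h3x
    have hx1 : (1:ℝ) < x := by linarith
    have hlgpos : 0 < Real.log x := Real.log_pos hx1
    have hxd : 0 < x ^ δ := Real.rpow_pos_of_pos (by linarith) _
    rw [Real.norm_eq_abs, Real.norm_eq_abs, abs_of_pos hlgpos,
      abs_of_pos hxd] at hx
    have hεx1 : Real.log x ≤ c / (4 * (3:ℝ) ^ ((1:ℝ) - δ)) * x ^ δ :=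
      hx.trans (by gcongr; exact min_le_left _ _)
    have hεx2 : Real.log x ≤ c ^ 2 / (4 * (3:ℝ) ^ ((1:ℝ) - δ) * C) * x ^ δ :=
      hx.trans (by gcongr; exact min_le_right _ _)
    have hll : Real.log (Real.log x) ≤ Real.log x := by
      have := Real.log_le_sub_one_of_pos hlgpos
      linarith
    have heq1 : 2 * (3:ℝ) ^ ((1:ℝ) - δ) * (c / (4 * (3:ℝ) ^ ((1:ℝ) - δ)) * x ^ δ)
        = c / 2 * x ^ δ := by field_simp; ring
    have heq2 : 2 * (3:ℝ) ^ ((1:ℝ) - δ) * C *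
        (c ^ 2 / (4 * (3:ℝ) ^ ((1:ℝ) - δ) * C) * x ^ δ) = c ^ 2 / 2 * x ^ δ := by
      field_simp; ring
    constructor
    · have h5 : 2 * (3:ℝ) ^ ((1:ℝ) - δ) * Real.log x
          ≤ 2 * (3:ℝ) ^ ((1:ℝ) - δ) * (c / (4 * (3:ℝ) ^ ((1:ℝ) - δ)) * x ^ δ) := by
        gcongr
      rw [heq1] at h5
      nlinarith
    · have h5 : 2 * (3:ℝ) ^ ((1:ℝ) - δ) * C * Real.log (Real.log x)
          ≤ 2 * (3:ℝ) ^ ((1:ℝ) - δ) * C *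
            (c ^ 2 / (4 * (3:ℝ) ^ ((1:ℝ) - δ) * C) * x ^ δ) := by
        gcongr
        exact hll.trans hεx2
      rw [heq2] at h5
      nlinarith [mul_pos (pow_pos hc 2) hxd]
  have hevN := (tendsto_natCast_atTop_atTop (R := ℝ)).eventually hev
  have hevN' := hevN.and (Filter.eventually_ge_atTop 3)
  obtain ⟨N₄, hN₄⟩ := Filter.eventually_atTop.mp hevN'
  exact ⟨N₄, fun N hN => ⟨(hN₄ N hN).1.1, (hN₄ N hN).1.2, (hN₄ N hN).2⟩⟩
lemma final_contra (m k B X Tc : ℝ) (hm : 1 ≤ m) (hk0 : 0 < k) (hB0 : 0 < B)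
    (h2B : 2 * B < k) (hX : 2 * (B * X) < k ^ 2)
    (hT : Tc ≤ m ^ 2 * X) (hcs : (m * k) ^ 2 ≤ B * (m * k + Tc)) : False := by
  have hm0 : 0 < m := lt_of_lt_of_le one_pos hm
  have hBT : B * Tc ≤ B * (m ^ 2 * X) := mul_le_mul_of_nonneg_left hT hB0.le
  have hA1 : 2 * B * (m * k) < k * (m * k) :=
    mul_lt_mul_of_pos_right h2B (mul_pos hm0 hk0)
  have hA2 : 1 * (m * (k * k)) ≤ m * (m * (k * k)) :=
    mul_le_mul_of_nonneg_right hm (by positivity)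
  have hA3 : 2 * (B * X) * m ^ 2 < k ^ 2 * m ^ 2 :=
    mul_lt_mul_of_pos_right hX (by positivity)
  nlinarith [hcs, hBT, hA1, hA2, hA3]

/-- If `A` has exceptional set of size `≤ N^{1-δ}`, `P` is a set of primes with
`|P ∩ (0,N]| ≫ N/log N`, and the off-diagonal count `Υ̂` satisfies the sieve bound,
then for all large `N` every element of `(2N, 3N]` lies in `A + P`. -/
theorem stmt_14 (A P : Set ℕ) (hprime : ∀ p ∈ P, p.Prime)
    (hdens : ∃ c : ℝ, 0 < c ∧ ∃ N₀ : ℕ, ∀ N ≥ N₀,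
      c * N / Real.log N ≤ ((P ∩ Set.Ioc 0 N).ncard : ℝ))
    (hA : ∃ δ : ℝ, 0 < δ ∧ ∃ N₁ : ℕ, ∀ N ≥ N₁,
      (((Aᶜ : Set ℕ) ∩ Set.Ioc 0 N).ncard : ℝ) ≤ (N : ℝ) ^ ((1 : ℝ) - δ))
    (hsieve : ∃ C : ℝ, 0 < C ∧ ∃ N₂ : ℕ, ∀ N ≥ N₂,
      ({q : ℕ × ℕ × ℕ × ℕ |
          q.1 ∈ ((A + P)ᶜ : Set ℕ) ∩ Set.Ioc (2 * N) (3 * N) ∧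
          q.2.1 ∈ ((A + P)ᶜ : Set ℕ) ∩ Set.Ioc (2 * N) (3 * N) ∧
          q.2.2.1 ∈ P ∩ Set.Ioc 0 N ∧ q.2.2.2 ∈ P ∩ Set.Ioc 0 N ∧
          q.1 - q.2.2.1 = q.2.1 - q.2.2.2 ∧ q.1 ≠ q.2.1}.ncard : ℝ)
        ≤ C * ((((A + P)ᶜ : Set ℕ) ∩ Set.Ioc (2 * N) (3 * N)).ncard : ℝ) ^ 2 *
            N * Real.log (Real.log N) / (Real.log N) ^ 2) :
    ∃ N₃ : ℕ, ∀ N ≥ N₃, ((A + P)ᶜ : Set ℕ) ∩ Set.Ioc (2 * N) (3 * N) = ∅ := by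
  classical
  obtain ⟨c, hc, N₀, hP⟩ := hdens
  obtain ⟨δ, hδ, N₁, hAe⟩ := hA
  obtain ⟨C, hC, N₂, hΥ⟩ := hsieve
  obtain ⟨N₄, hN₄⟩ := asymp_helper c C δ hc hC hδ
  refine ⟨max (max N₀ N₁) (max N₂ N₄), fun N hN => ?_⟩
  have hN0 : N ≥ N₀ := le_trans (le_trans (le_max_left _ _) (le_max_left _ _)) hN
  have hN1 : N ≥ N₁ := le_trans (le_trans (le_max_right _ _) (le_max_left _ _)) hN
  have hN2 : N ≥ N₂ := le_trans (le_trans (le_max_left _ _) (le_max_right _ _)) hN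
  obtain ⟨ha1, ha2, hN3⟩ :=
    hN₄ N (le_trans (le_trans (le_max_right _ _) (le_max_right _ _)) hN)
  set Q : Finset ℕ := (Finset.Ioc 0 N).filter (· ∈ P) with hQdef
  set E : Finset ℕ := (Finset.Ioc (2*N) (3*N)).filter (· ∈ ((A+P)ᶜ : Set ℕ)) with hEdef
  set D : Finset ℕ := (Finset.Ioc N (3*N)).filter (· ∈ (Aᶜ : Set ℕ)) with hDdef
  have hQset : P ∩ Set.Ioc 0 N = ↑Q := by
    ext x
    simp only [hQdef, Finset.coe_filter, Finset.mem_Ioc, Set.mem_inter_iff,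
      Set.mem_Ioc, Set.mem_setOf_eq]
    tauto
  have hEset : ((A+P)ᶜ : Set ℕ) ∩ Set.Ioc (2*N) (3*N) = ↑E := by
    ext x
    simp only [hEdef, Finset.coe_filter, Finset.mem_Ioc, Set.mem_inter_iff,
      Set.mem_Ioc, Set.mem_setOf_eq]
    tauto
  rw [hEset, Finset.coe_eq_empty]
  by_contra hne
  have hm1 : 1 ≤ E.card := Finset.card_pos.mpr (Finset.nonempty_iff_ne_empty.mpr hne)
  have hEfact : ∀ n ∈ E, n ∉ A + P ∧ 2*N < n ∧ n ≤ 3*N := by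
    intro n hn
    simp only [hEdef, Finset.mem_filter, Finset.mem_Ioc, Set.mem_compl_iff] at hn
    tauto
  have hQfact : ∀ p ∈ Q, p ∈ P ∧ 0 < p ∧ p ≤ N := by
    intro p hp
    simp only [hQdef, Finset.mem_filter, Finset.mem_Ioc] at hp
    tauto
  have hmaps : ∀ z ∈ E ×ˢ Q, z.1 - z.2 ∈ D := by
    intro z hz
    rw [Finset.mem_product] at hz
    obtain ⟨hnAP, hn1, hn2⟩ := hEfact z.1 hz.1
    obtain ⟨hpP, hp1, hp2⟩ := hQfact z.2 hz.2
    rw [hDdef, Finset.mem_filter, Finset.mem_Ioc]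
    refine ⟨⟨by omega, by omega⟩, ?_⟩
    intro hzA
    exact hnAP (Set.mem_add.mpr ⟨z.1 - z.2, hzA, z.2, hpP, by omega⟩)
  set W : Finset ((ℕ × ℕ) × ℕ × ℕ) :=
    ((E ×ˢ Q) ×ˢ (E ×ˢ Q)).filter (fun w => w.1.1 - w.1.2 = w.2.1 - w.2.2) with hWdef
  have hCS := cs_energy (E ×ˢ Q) D (fun z => z.1 - z.2) hmaps
  set T : Finset ((ℕ × ℕ) × ℕ × ℕ) := W.filter (fun w => ¬ w.1.1 = w.2.1) with hTdef
  have hsplit := Finset.card_filter_add_card_filter_not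
    (s := W) (p := fun w => w.1.1 = w.2.1)
  have hdiag : W.filter (fun w => w.1.1 = w.2.1) = (E ×ˢ Q).image (fun z => (z, z)) := by
    ext w
    simp only [hWdef, Finset.mem_filter, Finset.mem_image, Finset.mem_product]
    constructor
    · rintro ⟨⟨⟨⟨h1, h2⟩, h3, h4⟩, h5⟩, h6⟩
      obtain ⟨-, hb1, -⟩ := hEfact _ h1
      obtain ⟨-, -, hb2⟩ := hQfact _ h2
      obtain ⟨-, hb3, -⟩ := hEfact _ h3
      obtain ⟨-, -, hb4⟩ := hQfact _ h4
      have hsnd : w.1.2 = w.2.2 := by omega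
      exact ⟨w.1, ⟨h1, h2⟩, Prod.ext_iff.mpr ⟨rfl, Prod.ext_iff.mpr ⟨h6, hsnd⟩⟩⟩
    · rintro ⟨z, ⟨hz1, hz2⟩, rfl⟩
      exact ⟨⟨⟨⟨hz1, hz2⟩, hz1, hz2⟩, rfl⟩, rfl⟩
  have hdiagcard : (W.filter (fun w => w.1.1 = w.2.1)).card = E.card * Q.card := by
    rw [hdiag, Finset.card_image_of_injective _ (fun a b h => (Prod.ext_iff.mp h).1),
      Finset.card_product]
  have hSN : {q : ℕ × ℕ × ℕ × ℕ |
          q.1 ∈ ((A + P)ᶜ : Set ℕ) ∩ Set.Ioc (2 * N) (3 * N) ∧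
          q.2.1 ∈ ((A + P)ᶜ : Set ℕ) ∩ Set.Ioc (2 * N) (3 * N) ∧
          q.2.2.1 ∈ P ∩ Set.Ioc 0 N ∧ q.2.2.2 ∈ P ∩ Set.Ioc 0 N ∧
          q.1 - q.2.2.1 = q.2.1 - q.2.2.2 ∧ q.1 ≠ q.2.1}
      = ↑(T.image (fun w => (w.1.1, w.2.1, w.1.2, w.2.2))) := by
    ext q
    rw [Set.mem_setOf_eq, hEset, hQset]
    simp only [Finset.coe_image, Set.mem_image, Finset.mem_coe, hTdef, hWdef,
      Finset.mem_filter, Finset.mem_product, Finset.mem_coe]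
    constructor
    · rintro ⟨h1, h2, h3, h4, h5, h6⟩
      exact ⟨((q.1, q.2.2.1), (q.2.1, q.2.2.2)), ⟨⟨⟨⟨h1, h3⟩, h2, h4⟩, h5⟩, h6⟩, rfl⟩
    · rintro ⟨w, ⟨⟨⟨⟨h1, h2⟩, h3, h4⟩, h5⟩, h6⟩, rfl⟩
      exact ⟨h1, h3, h2, h4, h5, h6⟩
  have hTinj : Function.Injective
      (fun w : (ℕ × ℕ) × ℕ × ℕ => (w.1.1, w.2.1, w.1.2, w.2.2)) := by
    intro a b h
    simp only [Prod.mk.injEq] at h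
    obtain ⟨h1, h2, h3, h4⟩ := h
    exact Prod.ext_iff.mpr ⟨Prod.ext_iff.mpr ⟨h1, h3⟩, Prod.ext_iff.mpr ⟨h2, h4⟩⟩
  have hTcard : ({q : ℕ × ℕ × ℕ × ℕ |
          q.1 ∈ ((A + P)ᶜ : Set ℕ) ∩ Set.Ioc (2 * N) (3 * N) ∧
          q.2.1 ∈ ((A + P)ᶜ : Set ℕ) ∩ Set.Ioc (2 * N) (3 * N) ∧
          q.2.2.1 ∈ P ∩ Set.Ioc 0 N ∧ q.2.2.2 ∈ P ∩ Set.Ioc 0 N ∧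
          q.1 - q.2.2.1 = q.2.1 - q.2.2.2 ∧ q.1 ≠ q.2.1}.ncard) = T.card := by
    rw [hSN, Set.ncard_coe_finset, Finset.card_image_of_injective _ hTinj]
  -- numbers
  have hNpos : (0:ℝ) < N := by
    have h0 : (0:ℕ) < N := by omega
    exact_mod_cast h0
  have hlg1 : 1 < Real.log N := by
    rw [Real.lt_log_iff_exp_lt hNpos]
    have h1 : Real.exp 1 < 2.7182818286 := Real.exp_one_lt_d9
    have h2 : (3:ℝ) ≤ N := by exact_mod_cast hN3
    linarith
  have hlg0 : 0 < Real.log N := by linarith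
  have hL0 : 0 < Real.log (Real.log N) := Real.log_pos hlg1
  set m : ℝ := (E.card : ℝ) with hmdef
  set k : ℝ := (Q.card : ℝ) with hkdef
  set B : ℝ := (3:ℝ) ^ ((1:ℝ) - δ) * (N:ℝ) ^ ((1:ℝ) - δ) with hBdef
  have hB0 : 0 < B := mul_pos (Real.rpow_pos_of_pos (by norm_num) _)
    (Real.rpow_pos_of_pos hNpos _)
  have hm : 1 ≤ m := by rw [hmdef]; exact_mod_cast hm1
  have hk : c * N / Real.log N ≤ k := by
    have h := hP N hN0
    rwa [hQset, Set.ncard_coe_finset] at h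
  have hk0 : 0 < k := lt_of_lt_of_le (by positivity) hk
  -- D bound
  have hDb : (D.card : ℝ) ≤ B := by
    have hDsub : D ⊆ (Finset.Ioc 0 (3*N)).filter (· ∈ (Aᶜ : Set ℕ)) := by
      intro x hx
      simp only [hDdef, Finset.mem_filter, Finset.mem_Ioc] at hx ⊢
      exact ⟨⟨by omega, hx.1.2⟩, hx.2⟩
    have hDcoe : ((Aᶜ : Set ℕ) ∩ Set.Ioc 0 (3*N))
        = ↑((Finset.Ioc 0 (3*N)).filter (· ∈ (Aᶜ : Set ℕ))) := by
      ext x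
      simp only [Finset.coe_filter, Finset.mem_Ioc, Set.mem_inter_iff,
        Set.mem_Ioc, Set.mem_setOf_eq]
      tauto
    have h1 : (D.card : ℝ) ≤ (((Aᶜ : Set ℕ) ∩ Set.Ioc 0 (3*N)).ncard : ℝ) := by
      rw [hDcoe, Set.ncard_coe_finset]
      exact_mod_cast Finset.card_le_card hDsub
    have h2 := hAe (3*N) (by omega)
    have h3 : ((3*N : ℕ) : ℝ) ^ ((1:ℝ) - δ) = B := by
      rw [hBdef, ← Real.mul_rpow (by norm_num) (Nat.cast_nonneg N)]
      push_cast
      ring_nf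
    rw [h3] at h2
    linarith
  -- Cauchy-Schwarz reshaped
  have hprodcard : ((E ×ˢ Q).card : ℝ) = m * k := by
    rw [hmdef, hkdef, Finset.card_product]; push_cast; ring
  have hWcard : (W.card : ℝ) = m * k + (T.card : ℝ) := by
    rw [hmdef, hkdef, hTdef, ← hsplit, hdiagcard]
    push_cast
    ring
  have hcs2 : (m * k) ^ 2 ≤ B * (m * k + (T.card : ℝ)) := by
    rw [← hWcard, ← hprodcard]
    refine hCS.trans ?_
    have hW0 : (0:ℝ) ≤ (W.card : ℝ) := by positivity
    exact mul_le_mul_of_nonneg_right hDb hW0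
  -- sieve bound
  have hub := hΥ N hN2
  have hEcard : ((((A + P)ᶜ : Set ℕ) ∩ Set.Ioc (2 * N) (3 * N)).ncard : ℝ) = m := by
    rw [hmdef, hEset, Set.ncard_coe_finset]
  rw [hTcard, hEcard] at hub
  set X : ℝ := C * (N:ℝ) * Real.log (Real.log N) / (Real.log N) ^ 2 with hXdef
  have hT : (T.card : ℝ) ≤ m ^ 2 * X := by
    rw [hXdef]
    calc (T.card : ℝ) ≤ C * m ^ 2 * N * Real.log (Real.log N) / Real.log N ^ 2 := hub
      _ = m ^ 2 * (C * (N:ℝ) * Real.log (Real.log N) / (Real.log N) ^ 2) := by ring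
  -- asymptotic comparisons
  have hNsplit : (N:ℝ) ^ δ * (N:ℝ) ^ ((1:ℝ) - δ) = (N:ℝ) := by
    rw [← Real.rpow_add hNpos]
    norm_num
  have h2B : 2 * B < k := by
    have h1 : 2 * B * Real.log N < c * N := by
      calc 2 * B * Real.log N
          = (2 * (3:ℝ) ^ ((1:ℝ) - δ) * Real.log N) * (N:ℝ) ^ ((1:ℝ) - δ) := by
            rw [hBdef]; ring
        _ < (c * (N:ℝ) ^ δ) * (N:ℝ) ^ ((1:ℝ) - δ) :=
            mul_lt_mul_of_pos_right ha1 (Real.rpow_pos_of_pos hNpos _)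
        _ = c * N := by rw [mul_assoc, hNsplit]
    have h2 : 2 * B < c * N / Real.log N := (lt_div_iff₀ hlg0).mpr h1
    linarith
  have hX2 : 2 * (B * X) < k ^ 2 := by
    have h1 : 2 * (B * (C * (N:ℝ) * Real.log (Real.log N))) < c ^ 2 * (N:ℝ) ^ 2 := by
      calc 2 * (B * (C * (N:ℝ) * Real.log (Real.log N)))
          = (2 * (3:ℝ) ^ ((1:ℝ) - δ) * C * Real.log (Real.log N))
              * ((N:ℝ) ^ ((1:ℝ) - δ) * N) := by rw [hBdef]; ring
        _ < (c ^ 2 * (N:ℝ) ^ δ) * ((N:ℝ) ^ ((1:ℝ) - δ) * N) := by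
            refine mul_lt_mul_of_pos_right ha2 ?_
            positivity
        _ = c ^ 2 * (N:ℝ) ^ 2 := by
            rw [← mul_assoc, mul_assoc (c ^ 2), hNsplit]; ring
    have h2 : 2 * (B * X) < c ^ 2 * (N:ℝ) ^ 2 / (Real.log N) ^ 2 := by
      have heq : 2 * (B * X)
          = 2 * (B * (C * (N:ℝ) * Real.log (Real.log N))) / (Real.log N) ^ 2 := by
        rw [hXdef]; ring
      rw [heq]
      gcongr
    have h3 : c ^ 2 * (N:ℝ) ^ 2 / (Real.log N) ^ 2 ≤ k ^ 2 := by
      have h4 : (c * N / Real.log N) ^ 2 ≤ k ^ 2 := by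
        have h0 : 0 ≤ c * N / Real.log N := by positivity
        exact pow_le_pow_left₀ h0 hk 2
      calc c ^ 2 * (N:ℝ) ^ 2 / (Real.log N) ^ 2 = (c * N / Real.log N) ^ 2 := by ring
        _ ≤ k ^ 2 := h4
    linarith
  exact final_contra m k B X (T.card : ℝ) hm hk0 hB0 h2B hX2 hT hcs2
end

section
/- Let A, B ⊆ ℕ, let q be a natural number, and let L, M, N be unions of arithmetic progressions modulo q with N ⊆ L + M. Write ⟨B ∧ L⟩_0^N = min over progressions P_{l,q} comprising L of |B ∩ P_{l,q}|_0^N. Then for each natural number N₀, (⟨B ∧ L⟩_0^{N₀} · |(ℕ\(A+B)) ∩ N|_{2N₀}^{3N₀})² ≤ q · |(ℕ\A) ∩ M|_{N₀}^{3N₀} · Υ((ℕ\(A+B)) ∩ N, B ∩ L; N₀). -/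
/-!
Let `C = (ℕ \ (A + B)) ∩ N ∩ (2N₀, 3N₀]`, `D = B ∩ L ∩ (0, N₀]`, `E = (ℕ \ A) ∩ M ∩ (N₀, 3N₀]`.
Each `c ∈ C` is `a + b` with `a ∈ P_{l,q} ⊆ L`, `b ∈ M`; for every `d ∈ B ∩ P_{l,q} ∩ (0, N₀]` the
difference `c - d` is congruent to `b`, so lies in `M`, and is not in `A` since `c ∉ A + B`.
Hence at least `⟨B ∧ L⟩ · |C|` pairs `(c, d) ∈ C × D` have `c - d ∈ E`, and Cauchy–Schwarz over
the value `e = c - d ∈ E` bounds the square of that number by `|E| · Υ(C, D)`.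
-/

open Pointwise Finset

namespace Finset

variable {α : Type*} [DecidableEq α] [Sub α]

/-- `#(subQuadruples C D)` is the paper's `Υ(C, D)`. -/
def subQuadruples (C D : Finset α) : Finset (α × α × α × α) :=
  {t ∈ C ×ˢ C ×ˢ D ×ˢ D | t.1 - t.2.2.1 = t.2.1 - t.2.2.2}

lemma coe_subQuadruples (C D : Finset α) :
    (subQuadruples C D : Set (α × α × α × α)) = {t | t.1 ∈ (C : Set α) ∧ t.2.1 ∈ (C : Set α) ∧
      t.2.2.1 ∈ (D : Set α) ∧ t.2.2.2 ∈ (D : Set α) ∧ t.1 - t.2.2.1 = t.2.1 - t.2.2.2} := by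
  ext t
  simp only [subQuadruples, coe_filter, mem_product, mem_coe, Set.mem_ofPred_eq, and_assoc]

lemma mul_card_le_card_filter_sub_mem {C D E : Finset α} {k : ℕ}
    (h : ∀ c ∈ C, k ≤ #{d ∈ D | c - d ∈ E}) :
    k * #C ≤ #{p ∈ C ×ˢ D | p.1 - p.2 ∈ E} := by
  rw [card_filter, sum_product, mul_comm, ← smul_eq_mul, ← sum_const]
  refine sum_le_sum fun c hc => ?_
  simpa only [card_filter] using h c hc

lemma sum_sq_card_filter_sub_eq_le_card_subQuadruples (C D E : Finset α) :
    ∑ e ∈ E, #{p ∈ C ×ˢ D | p.1 - p.2 = e} ^ 2 ≤ #(subQuadruples C D) := by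
  set F : α → Finset (α × α) := fun e => {p ∈ C ×ˢ D | p.1 - p.2 = e}
  calc ∑ e ∈ E, #(F e) ^ 2 = #(E.sigma fun e => F e ×ˢ F e) := by
        simp only [card_sigma, card_product, sq]
    _ ≤ #(subQuadruples C D) := by
      refine card_le_card_of_injOn (fun x => (x.2.1.1, x.2.2.1, x.2.1.2, x.2.2.2)) ?_ ?_
      · rintro ⟨e, p, p'⟩ hx
        simp only [coe_sigma, Set.mem_sigma_iff, coe_product, Set.mem_prod, mem_coe, F,
          mem_filter, mem_product] at hx
        simp only [subQuadruples, coe_filter, mem_product, Set.mem_ofPred_eq]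
        grind
      · rintro ⟨e, p, p'⟩ hx ⟨f, r, r'⟩ hy hxy
        simp only [coe_sigma, Set.mem_sigma_iff, coe_product, Set.mem_prod, mem_coe, F,
          mem_filter, mem_product] at hx hy
        simp only [Prod.mk.injEq] at hxy
        grind

lemma sq_card_filter_sub_mem_le (C D E : Finset α) :
    #{p ∈ C ×ˢ D | p.1 - p.2 ∈ E} ^ 2 ≤ #E * #(subQuadruples C D) := by
  have hfib : #{p ∈ C ×ˢ D | p.1 - p.2 ∈ E} = ∑ e ∈ E, #{p ∈ C ×ˢ D | p.1 - p.2 = e} := by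
    rw [card_eq_sum_card_fiberwise (s := {p ∈ C ×ˢ D | p.1 - p.2 ∈ E})
      (f := fun p => p.1 - p.2) fun p hp => (mem_filter.1 hp).2]
    refine sum_congr rfl fun e he => ?_
    rw [filter_filter]
    congr 1
    exact filter_congr fun p _ => ⟨fun h => h.2, fun h => ⟨h ▸ he, h⟩⟩
  rw [hfib]
  exact (sq_sum_le_card_mul_sum_sq).trans
    (Nat.mul_le_mul_left _ (sum_sq_card_filter_sub_eq_le_card_subQuadruples C D E))

lemma sq_mul_card_le_card_mul_card_subQuadruples {C D E : Finset α} {k : ℕ}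
    (h : ∀ c ∈ C, k ≤ #{d ∈ D | c - d ∈ E}) :
    (k * #C) ^ 2 ≤ #E * #(subQuadruples C D) :=
  (Nat.pow_le_pow_left (mul_card_le_card_filter_sub_mem h) 2).trans
    (sq_card_filter_sub_mem_le C D E)

end Finset

lemma Set.inter_Ioc_eq_coe_filter {α : Type*} [Preorder α] [LocallyFiniteOrder α] (S : Set α)
    [DecidablePred (· ∈ S)] (a b : α) : S ∩ Set.Ioc a b = ↑{x ∈ Finset.Ioc a b | x ∈ S} := by
  ext x
  simp only [Set.mem_inter_iff, coe_filter, Finset.mem_Ioc, Set.mem_Ioc, Set.mem_ofPred_eq,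
    and_comm]

namespace Nat

lemma sub_notMem_of_notMem_add {A B : Set ℕ} {c d : ℕ} (hc : c ∉ A + B) (hd : d ∈ B)
    (hdc : d ≤ c) : c - d ∉ A :=
  fun h => hc ⟨c - d, h, d, hd, Nat.sub_add_cancel hdc⟩

lemma sub_mod_eq_of_add_eq {q a b c d : ℕ} (hab : a + b = c) (hd : d % q = a % q)
    (hdc : d ≤ c) : (c - d) % q = b % q := by
  refine Nat.ModEq.add_right_cancel' d ?_
  rw [Nat.sub_add_cancel hdc, ← hab, add_comm a b]
  exact (Nat.ModEq.add_left b hd).symm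

lemma mem_iUnion_mod_of_mod_eq {q x y : ℕ} {𝔐 : Finset ℕ}
    (hx : x ∈ ⋃ a ∈ 𝔐, {z : ℕ | z % q = a}) (hxy : y % q = x % q) :
    y ∈ ⋃ a ∈ 𝔐, {z : ℕ | z % q = a} := by
  simp only [Set.mem_iUnion, Set.mem_ofPred_eq] at hx ⊢
  obtain ⟨a, ha, rfl⟩ := hx
  exact ⟨_, ha, hxy⟩

lemma exists_mod_forall_sub_mem {A B : Set ℕ} {q : ℕ} {𝔏 𝔐 : Finset ℕ} {c : ℕ}
    (hc : c ∉ A + B)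
    (hcLM : c ∈ (⋃ l ∈ 𝔏, {x : ℕ | x % q = l}) + ⋃ a ∈ 𝔐, {x : ℕ | x % q = a}) :
    ∃ l ∈ 𝔏, ∀ d ∈ B, d % q = l → d ≤ c → c - d ∈ Aᶜ ∩ ⋃ a ∈ 𝔐, {x : ℕ | x % q = a} := by
  obtain ⟨a, ha, b, hb, hab⟩ := hcLM
  simp only [Set.mem_iUnion, Set.mem_ofPred_eq] at ha
  obtain ⟨l, hl, rfl⟩ := ha
  refine ⟨_, hl, fun d hdB hd hdc => ⟨sub_notMem_of_notMem_add hc hdB hdc, ?_⟩⟩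
  exact mem_iUnion_mod_of_mod_eq hb (sub_mod_eq_of_add_eq hab hd hdc)

end Nat

theorem stmt_17_general (A B : Set ℕ) (q : ℕ) (hq : 1 ≤ q)
    (𝔏 𝔐 : Finset ℕ) (h𝔏ne : 𝔏.Nonempty)
    (L M N : Set ℕ)
    (hL : L = ⋃ l ∈ 𝔏, {x : ℕ | x % q = l}) (hM : M = ⋃ a ∈ 𝔐, {x : ℕ | x % q = a})
    (hNLM : N ⊆ L + M)
    (N₀ : ℕ) :
    (𝔏.inf' h𝔏ne (fun l => (B ∩ {x : ℕ | x % q = l} ∩ Set.Ioc 0 N₀).ncard) *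
        (((A + B)ᶜ : Set ℕ) ∩ N ∩ Set.Ioc (2 * N₀) (3 * N₀)).ncard) ^ 2
      ≤ q * ((Aᶜ : Set ℕ) ∩ M ∩ Set.Ioc N₀ (3 * N₀)).ncard *
        {t : ℕ × ℕ × ℕ × ℕ |
          t.1 ∈ ((A + B)ᶜ : Set ℕ) ∩ N ∩ Set.Ioc (2 * N₀) (3 * N₀) ∧
          t.2.1 ∈ ((A + B)ᶜ : Set ℕ) ∩ N ∩ Set.Ioc (2 * N₀) (3 * N₀) ∧
          t.2.2.1 ∈ B ∩ L ∩ Set.Ioc 0 N₀ ∧ t.2.2.2 ∈ B ∩ L ∩ Set.Ioc 0 N₀ ∧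
          t.1 - t.2.2.1 = t.2.1 - t.2.2.2}.ncard := by
  classical
  subst hL hM
  simp only [Set.inter_Ioc_eq_coe_filter, ← coe_subQuadruples, Set.ncard_coe_finset]
  refine (sq_mul_card_le_card_mul_card_subQuadruples fun c hc => ?_).trans
    (Nat.mul_le_mul_right _ (Nat.le_mul_of_pos_left _ hq))
  simp only [mem_filter, Finset.mem_Ioc, Set.mem_inter_iff, Set.mem_compl_iff] at hc
  obtain ⟨⟨hc₀, hc₁⟩, hcAB, hcN⟩ := hc
  obtain ⟨l, hl, hsub⟩ := Nat.exists_mod_forall_sub_mem hcAB (hNLM hcN)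
  refine (inf'_le _ hl).trans (card_le_card fun d hd => ?_)
  simp only [mem_filter, Finset.mem_Ioc, Set.mem_inter_iff, Set.mem_ofPred_eq] at hd ⊢
  obtain ⟨⟨hd₀, hd₁⟩, hdB, hdl⟩ := hd
  exact ⟨⟨⟨hd₀, hd₁⟩, hdB, Set.mem_iUnion₂.2 ⟨l, hl, hdl⟩⟩, ⟨by omega, by omega⟩,
    hsub d hdB hdl (by omega)⟩

/-- Theorem 2.1: the basic inequality with congruence conditions. Here `P_{a,q}` is
realised in `ℕ` as `{x | x % q = a}`, `L, M, N` are unions of such progressions, and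
`⟨B ∧ L⟩₀^{N₀}` is the minimum over the progressions comprising `L` of `|B ∩ P_{l,q}|₀^{N₀}`. -/
theorem stmt_17 (A B : Set ℕ) (q : ℕ) (hq : 1 ≤ q)
    (𝔏 𝔐 𝔑 : Finset ℕ) (h𝔏 : 𝔏 ⊆ Finset.range q) (h𝔐 : 𝔐 ⊆ Finset.range q)
    (h𝔑 : 𝔑 ⊆ Finset.range q) (h𝔏ne : 𝔏.Nonempty)
    (L M N : Set ℕ)
    (hL : L = ⋃ l ∈ 𝔏, {x : ℕ | x % q = l}) (hM : M = ⋃ a ∈ 𝔐, {x : ℕ | x % q = a})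
    (hN : N = ⋃ c ∈ 𝔑, {x : ℕ | x % q = c}) (hNLM : N ⊆ L + M)
    (N₀ : ℕ) :
    (𝔏.inf' h𝔏ne (fun l => (B ∩ {x : ℕ | x % q = l} ∩ Set.Ioc 0 N₀).ncard) *
        (((A + B)ᶜ : Set ℕ) ∩ N ∩ Set.Ioc (2 * N₀) (3 * N₀)).ncard) ^ 2
      ≤ q * ((Aᶜ : Set ℕ) ∩ M ∩ Set.Ioc N₀ (3 * N₀)).ncard *
        {t : ℕ × ℕ × ℕ × ℕ |
          t.1 ∈ ((A + B)ᶜ : Set ℕ) ∩ N ∩ Set.Ioc (2 * N₀) (3 * N₀) ∧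
          t.2.1 ∈ ((A + B)ᶜ : Set ℕ) ∩ N ∩ Set.Ioc (2 * N₀) (3 * N₀) ∧
          t.2.2.1 ∈ B ∩ L ∩ Set.Ioc 0 N₀ ∧ t.2.2.2 ∈ B ∩ L ∩ Set.Ioc 0 N₀ ∧
          t.1 - t.2.2.1 = t.2.1 - t.2.2.2}.ncard :=
  stmt_17_general A B q hq 𝔏 𝔐 h𝔏ne L M N hL hM hNLM N₀
end

section
/- Let Z ⊆ (0, N] ∩ ℕ be finite with cardinality Z, let P = N^{1/3}, and let Q(m) denote the number of pairs (x, n) with 1 ≤ x ≤ P a natural number, n ∈ Z, and x³ + n = m. Then for every ε > 0, Σ_m Q(m)² ≪ P·Z + P^{1/2+ε}·Z^{3/2}, where the sum is over all natural numbers m. -/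
/-!
Davenport's argument. Quadruples with `x₁ = x₂` number at most `P |Z|`, and by symmetry it
suffices to count the `u` quadruples with `x₂ < x₁`; write these as `x₁ = x + h`, `x₂ = x`, and
group them by the key `(h, n₁)`, of which there are at most `P |Z|`. Cauchy–Schwarz over the keys
gives `u² ≤ P |Z| (u + w)`, where `w` counts pairs of distinct quadruples with the same key. For
such a pair `n₂' - n₂ = 3 h (x' - x) (x + x' + h) ≠ 0`, so given `(n₂, n₂')` the pair is fixed by
two divisors of `n₂' - n₂` and a sign, and the divisor bound `τ(n) ≪ n^{ε/3}` gives
`w ≪ |Z|² P^{2ε}`. Solving the quadratic inequality, `u ≤ P |Z| + (P |Z| w)^{1/2}`.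
-/

open Finset

theorem exists_succ_le_mul_rpow_mul {ε : ℝ} (hε : 0 < ε) :
    ∃ M : ℝ, 1 ≤ M ∧ ∀ p : ℝ, 2 ≤ p → ∀ a : ℕ, (a + 1 : ℝ) ≤ M * p ^ (ε * a) := by
  set c := ε * Real.log 2
  have hc : 0 < c := mul_pos hε (Real.log_pos one_lt_two)
  refine ⟨max 1 c⁻¹, le_max_left _ _, fun p hp a => ?_⟩
  have hMc : 1 ≤ max 1 c⁻¹ * c := (inv_le_iff_one_le_mul₀ hc).1 (le_max_right _ _)
  have hexp : 1 + c * a ≤ p ^ (ε * a) := by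
    rw [Real.rpow_def_of_pos (by linarith)]
    refine (Real.add_one_le_exp _).trans' ?_
    have : c * a ≤ Real.log p * (ε * a) := by
      rw [show c * a = Real.log 2 * (ε * a) by ring]
      gcongr
    linarith
  have ha : (0 : ℝ) ≤ a := a.cast_nonneg
  nlinarith [le_max_left 1 c⁻¹]

theorem succ_le_rpow_mul {ε p : ℝ} (hp : 0 ≤ p) (h2 : 2 ≤ p ^ ε) (a : ℕ) :
    (a + 1 : ℝ) ≤ p ^ (ε * a) := by
  rw [Real.rpow_mul_natCast hp]
  calc (a + 1 : ℝ) ≤ 2 ^ a := by exact_mod_cast Nat.lt_two_pow_self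
    _ ≤ (p ^ ε) ^ a := by gcongr

theorem Nat.exists_card_divisors_le_rpow {ε : ℝ} (hε : 0 < ε) :
    ∃ C : ℝ, 0 < C ∧ ∀ n : ℕ, (#n.divisors : ℝ) ≤ C * n ^ ε := by
  obtain ⟨M, hM, hsmall⟩ := exists_succ_le_mul_rpow_mul hε
  -- beyond `B` every prime satisfies `p ^ ε ≥ 2`, so only the primes up to `B` cost a factor `M`
  set B := ⌈(2 : ℝ) ^ ε⁻¹⌉₊
  refine ⟨M ^ B, by positivity, fun n => ?_⟩
  rcases eq_or_ne n 0 with rfl | hn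
  · simp [Real.zero_rpow hε.ne']
  have hfactor : ∀ p ∈ n.primeFactors, (n.factorization p + 1 : ℝ) ≤
      (if p ≤ B then M else 1) * (p : ℝ) ^ (ε * n.factorization p) := by
    intro p hp
    have hp2 : (2 : ℝ) ≤ p := by exact_mod_cast (prime_of_mem_primeFactors hp).two_le
    split_ifs with hpB
    · exact hsmall p hp2 _
    · rw [one_mul]
      refine succ_le_rpow_mul p.cast_nonneg ?_ _
      calc (2 : ℝ) = ((2 : ℝ) ^ ε⁻¹) ^ ε := by
            rw [← Real.rpow_mul zero_le_two, inv_mul_cancel₀ hε.ne', Real.rpow_one]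
        _ ≤ (p : ℝ) ^ ε := by
            gcongr
            exact (Nat.le_ceil _).trans (by exact_mod_cast (not_le.1 hpB).le)
  have hcount : #{p ∈ n.primeFactors | p ≤ B} ≤ B :=
    (card_le_card fun p hp => by
      simp only [mem_filter] at hp
      exact mem_Icc.2 ⟨(prime_of_mem_primeFactors hp.1).one_lt.le, hp.2⟩).trans
      (Nat.card_Icc 1 B).le
  have hn_rpow : (n : ℝ) ^ ε = ∏ p ∈ n.primeFactors, (p : ℝ) ^ (ε * n.factorization p) := by
    conv_lhs => rw [prod_primeFactors_pow_factorization hn]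
    push_cast
    rw [← Real.finsetProd_rpow _ _ (fun _ _ => by positivity)]
    refine prod_congr rfl fun p _ => ?_
    rw [mul_comm, Real.rpow_natCast_mul p.cast_nonneg]
  calc (#n.divisors : ℝ) = ∏ p ∈ n.primeFactors, (n.factorization p + 1 : ℝ) := by
        rw [card_divisors hn]; push_cast; rfl
    _ ≤ ∏ p ∈ n.primeFactors, (if p ≤ B then M else 1) * (p : ℝ) ^ (ε * n.factorization p) :=
        prod_le_prod (fun _ _ => by positivity) hfactor
    _ ≤ M ^ B * n ^ ε := by
        rw [prod_mul_distrib, hn_rpow, prod_ite, prod_const, prod_const_one, mul_one]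
        gcongr

theorem le_add_of_sq_le_mul_add {u a w c : ℝ} (ha : 0 ≤ a) (hc : 0 ≤ c)
    (h : u ^ 2 ≤ a * (u + w)) (haw : a * w ≤ c ^ 2) : u ≤ a + c := by
  nlinarith

namespace Finset

variable {α β : Type*}

theorem card_sq_le_card_mul_card_sameFiber [DecidableEq β] {s : Finset α} {t : Finset β} {f : α → β}
    (hf : Set.MapsTo f s t) : #s ^ 2 ≤ #t * #{p ∈ s ×ˢ s | f p.1 = f p.2} := by
  have hpairs : Set.MapsTo (fun p : α × α => f p.1) ↑{p ∈ s ×ˢ s | f p.1 = f p.2} t :=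
    fun p hp => hf (mem_product.1 (mem_filter.1 hp).1).1
  have hfiber : ∀ b, {p ∈ {p ∈ s ×ˢ s | f p.1 = f p.2} | f p.1 = b} =
      {a ∈ s | f a = b} ×ˢ {a ∈ s | f a = b} := by
    intro b; ext p; simp only [mem_filter, mem_product]; grind
  calc #s ^ 2 = (∑ b ∈ t, #{a ∈ s | f a = b}) ^ 2 := by rw [← card_eq_sum_card_fiberwise hf]
    _ ≤ #t * ∑ b ∈ t, #{a ∈ s | f a = b} ^ 2 := sq_sum_le_card_mul_sum_sq
    _ = #t * #{p ∈ s ×ˢ s | f p.1 = f p.2} := by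
        simp_rw [card_eq_sum_card_fiberwise hpairs, hfiber, card_product, sq]

theorem card_sameFiber_le [DecidableEq α] [DecidableEq β] (s : Finset α) (f : α → β) :
    #{p ∈ s ×ˢ s | f p.1 = f p.2} ≤ #s + #{p ∈ s.offDiag | f p.1 = f p.2} := by
  rw [← s.diag_union_offDiag, filter_union]
  exact (card_union_le _ _).trans (by grw [card_filter_le, diag_card])

end Finset

theorem card_le_two_mul_card_divisors_sq {d : ℤ} (S : Finset (ℕ × ℕ × ℕ))
    (hS : ∀ q ∈ S, q.1 ≠ 0 ∧ q.2.1 ≠ q.2.2 ∧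
      3 * (q.1 : ℤ) * (q.2.2 - q.2.1) * (q.2.1 + q.2.2 + q.1) = d) :
    #S ≤ 2 * #d.natAbs.divisors ^ 2 := by
  -- `h` and `|x' - x|` divide `d`; together with the sign of `x' - x` they determine `x + x'`
  let code : ℕ × ℕ × ℕ → ℕ × ℕ × Bool := fun q =>
    (q.1, ((q.2.2 : ℤ) - q.2.1).natAbs, decide (q.2.1 < q.2.2))
  have hmaps : ∀ q ∈ S, code q ∈ d.natAbs.divisors ×ˢ d.natAbs.divisors ×ˢ univ := by
    intro q hq
    obtain ⟨hh, hx, hd⟩ := hS q hq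
    have hx' : (q.2.2 : ℤ) - q.2.1 ≠ 0 := by omega
    have hd0 : d.natAbs ≠ 0 := by rw [← hd]; positivity
    subst hd
    simp only [code, mem_product, Nat.mem_divisors, mem_univ, and_true]
    exact ⟨⟨Int.natCast_dvd.1 (dvd_mul_of_dvd_left (dvd_mul_of_dvd_left (dvd_mul_left _ _) _) _),
      hd0⟩, Int.natAbs_dvd_natAbs.2 (dvd_mul_of_dvd_left (dvd_mul_left _ _) _), hd0⟩
  have hinj : Set.InjOn code S := by
    intro q hq r hr hqr
    obtain ⟨hh, hx, hd⟩ := hS q hq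
    obtain ⟨-, -, hd'⟩ := hS r hr
    simp only [code, Prod.mk.injEq, decide_eq_decide] at hqr
    obtain ⟨h1, h2, h3⟩ := hqr
    have hdiff : (q.2.2 : ℤ) - q.2.1 = r.2.2 - r.2.1 := by omega
    have hsum : (q.2.1 + q.2.2 : ℤ) = r.2.1 + r.2.2 := by
      have hne : 3 * (q.1 : ℤ) * (q.2.2 - q.2.1) ≠ 0 := by
        have : (q.2.2 : ℤ) - q.2.1 ≠ 0 := by omega
        positivity
      have := mul_left_cancel₀ hne (hd.trans (hd'.symm.trans (by rw [h1, hdiff])))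
      linarith
    ext <;> omega
  calc #S ≤ #(d.natAbs.divisors ×ˢ d.natAbs.divisors ×ˢ (univ : Finset Bool)) :=
        card_le_card_of_injOn code hmaps hinj
    _ = 2 * #d.natAbs.divisors ^ 2 := by simp [card_product]; ring

def cubeQuads (P : ℕ) (Z : Finset ℕ) : Finset (ℕ × ℕ × ℕ × ℕ) :=
  {t ∈ Icc 1 P ×ˢ Icc 1 P ×ˢ Z ×ˢ Z | t.1 ^ 3 + t.2.2.1 = t.2.1 ^ 3 + t.2.2.2}

def descCubeQuads (P : ℕ) (Z : Finset ℕ) : Finset (ℕ × ℕ × ℕ × ℕ) :=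
  {t ∈ cubeQuads P Z | t.2.1 < t.1}

section cubeQuads

variable (P : ℕ) (Z : Finset ℕ)

theorem mem_cubeQuads {t : ℕ × ℕ × ℕ × ℕ} : t ∈ cubeQuads P Z ↔
    (1 ≤ t.1 ∧ t.1 ≤ P) ∧ (1 ≤ t.2.1 ∧ t.2.1 ≤ P) ∧ t.2.2.1 ∈ Z ∧ t.2.2.2 ∈ Z ∧
      t.1 ^ 3 + t.2.2.1 = t.2.1 ^ 3 + t.2.2.2 := by
  simp only [cubeQuads, mem_filter, mem_product, mem_Icc, and_assoc]

theorem coe_cubeQuads_floor {R : ℝ} (hR : 0 ≤ R) :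
    ↑(cubeQuads ⌊R⌋₊ Z) = {t : ℕ × ℕ × ℕ × ℕ | 1 ≤ t.1 ∧ (t.1 : ℝ) ≤ R ∧
      1 ≤ t.2.1 ∧ (t.2.1 : ℝ) ≤ R ∧ t.2.2.1 ∈ Z ∧ t.2.2.2 ∈ Z ∧
      t.1 ^ 3 + t.2.2.1 = t.2.1 ^ 3 + t.2.2.2} := by
  ext t
  simp only [mem_coe, mem_cubeQuads, Nat.le_floor_iff hR, Set.mem_ofPred_eq, and_assoc]

variable {P Z} in
theorem eq_of_mem_cubeQuads {t s : ℕ × ℕ × ℕ × ℕ}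
    (ht : t ∈ cubeQuads P Z) (hs : s ∈ cubeQuads P Z) (h1 : t.1 = s.1) (h2 : t.2.1 = s.2.1)
    (h3 : t.2.2.1 = s.2.2.1 ∨ t.2.2.2 = s.2.2.2) : t = s := by
  have et := ((mem_cubeQuads P Z).1 ht).2.2.2.2
  have es := ((mem_cubeQuads P Z).1 hs).2.2.2.2
  rw [h1, h2] at et
  ext <;> omega

theorem card_cubeQuads_diag_le : #{t ∈ cubeQuads P Z | t.1 = t.2.1} ≤ P * #Z := by
  have hmaps : ∀ t ∈ {t ∈ cubeQuads P Z | t.1 = t.2.1}, (t.1, t.2.2.1) ∈ Icc 1 P ×ˢ Z := by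
    intro t ht
    simp only [mem_filter, mem_cubeQuads] at ht
    exact mem_product.2 ⟨mem_Icc.2 ht.1.1, ht.1.2.2.1⟩
  have hinj : Set.InjOn (fun t : ℕ × ℕ × ℕ × ℕ => (t.1, t.2.2.1))
      ({t ∈ cubeQuads P Z | t.1 = t.2.1} : Finset _) := by
    intro t ht s hs hts
    simp only [coe_filter, Set.mem_ofPred_eq, Prod.mk.injEq] at ht hs hts
    exact eq_of_mem_cubeQuads ht.1 hs.1 hts.1 (by omega) (.inl hts.2)
  simpa using card_le_card_of_injOn _ hmaps hinj

theorem card_cubeQuads_lt_eq :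
    #{t ∈ cubeQuads P Z | t.1 < t.2.1} = #{t ∈ cubeQuads P Z | t.2.1 < t.1} := by
  let swap : ℕ × ℕ × ℕ × ℕ → ℕ × ℕ × ℕ × ℕ := fun t => (t.2.1, t.1, t.2.2.2, t.2.2.1)
  have hswap : ∀ t, swap t ∈ cubeQuads P Z ↔ t ∈ cubeQuads P Z := by
    intro t; simp only [swap, mem_cubeQuads]; grind
  refine card_nbij' swap swap (fun t ht => ?_) (fun t ht => ?_) (fun _ _ => rfl) fun _ _ => rfl
  all_goals
    simp only [coe_filter, Set.mem_ofPred_eq] at ht ⊢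
    exact ⟨(hswap t).2 ht.1, ht.2⟩

theorem card_cubeQuads_le : #(cubeQuads P Z) ≤ P * #Z + 2 * #(descCubeQuads P Z) := by
  have hsplit := card_filter_add_card_filter_not (s := cubeQuads P Z) (fun t => t.2.1 < t.1)
  have hsplit' := card_filter_add_card_filter_not
    (s := {t ∈ cubeQuads P Z | ¬ t.2.1 < t.1}) (fun t => t.1 < t.2.1)
  simp only [filter_filter] at hsplit'
  have hlt : {t ∈ cubeQuads P Z | ¬ t.2.1 < t.1 ∧ t.1 < t.2.1} =
      {t ∈ cubeQuads P Z | t.1 < t.2.1} :=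
    filter_congr fun t _ => by omega
  have hdiag : {t ∈ cubeQuads P Z | ¬ t.2.1 < t.1 ∧ ¬ t.1 < t.2.1} =
      {t ∈ cubeQuads P Z | t.1 = t.2.1} :=
    filter_congr fun t _ => by omega
  rw [hlt, hdiag, card_cubeQuads_lt_eq] at hsplit'
  have := card_cubeQuads_diag_le P Z
  rw [descCubeQuads]
  omega

end cubeQuads

/-- For `x₂ < x₁` the quadruple is `(x + h, x, n, n + (x + h)³ - x³)`; its key is `(h, n)`. -/
def cubeQuadKey (t : ℕ × ℕ × ℕ × ℕ) : ℕ × ℕ := (t.1 - t.2.1, t.2.2.1)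

section descCubeQuads

variable {P : ℕ} {Z : Finset ℕ} {t s : ℕ × ℕ × ℕ × ℕ}

theorem eq_of_cubeQuadKey_eq (ht : t ∈ descCubeQuads P Z) (hs : s ∈ descCubeQuads P Z)
    (hkey : cubeQuadKey t = cubeQuadKey s) (hx : t.2.1 = s.2.1) : t = s := by
  simp only [descCubeQuads, mem_filter, cubeQuadKey, Prod.mk.injEq] at ht hs hkey
  exact eq_of_mem_cubeQuads ht.1 hs.1 (by omega) hx (.inl hkey.2)

theorem sub_eq_of_cubeQuadKey_eq (ht : t ∈ descCubeQuads P Z) (hs : s ∈ descCubeQuads P Z)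
    (hkey : cubeQuadKey t = cubeQuadKey s) :
    (s.2.2.2 : ℤ) - t.2.2.2 =
      3 * (cubeQuadKey t).1 * ((s.2.1 : ℤ) - t.2.1) * (t.2.1 + s.2.1 + (cubeQuadKey t).1) := by
  simp only [descCubeQuads, mem_filter, mem_cubeQuads, cubeQuadKey, Prod.mk.injEq] at ht hs hkey ⊢
  have et : ((t.2.1 + (t.1 - t.2.1) : ℕ) : ℤ) ^ 3 + t.2.2.1 = (t.2.1 : ℤ) ^ 3 + t.2.2.2 := by
    rw [Nat.add_sub_cancel' ht.2.le]; exact_mod_cast ht.1.2.2.2.2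
  have es : ((s.2.1 + (t.1 - t.2.1) : ℕ) : ℤ) ^ 3 + t.2.2.1 = (s.2.1 : ℤ) ^ 3 + s.2.2.2 := by
    rw [hkey.1, Nat.add_sub_cancel' hs.2.le, hkey.2]; exact_mod_cast hs.1.2.2.2.2
  push_cast at et es
  linear_combination et - es

variable (P Z)

theorem card_descCubeQuads_sq_le :
    #(descCubeQuads P Z) ^ 2 ≤ P * #Z * (#(descCubeQuads P Z) +
      #{p ∈ (descCubeQuads P Z).offDiag | cubeQuadKey p.1 = cubeQuadKey p.2}) := by
  have hkey : ∀ t ∈ descCubeQuads P Z, cubeQuadKey t ∈ Icc 1 P ×ˢ Z := by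
    intro t ht
    simp only [descCubeQuads, mem_filter, mem_cubeQuads] at ht
    simp only [cubeQuadKey, mem_product, mem_Icc]
    exact ⟨by omega, ht.1.2.2.1⟩
  calc #(descCubeQuads P Z) ^ 2 ≤ #(Icc 1 P ×ˢ Z) *
        #{p ∈ descCubeQuads P Z ×ˢ descCubeQuads P Z | cubeQuadKey p.1 = cubeQuadKey p.2} :=
        card_sq_le_card_mul_card_sameFiber hkey
    _ ≤ _ := by
        rw [card_product, Nat.card_Icc, Nat.add_sub_cancel]
        gcongr
        exact card_sameFiber_le _ _

theorem card_offDiag_sameKey_le :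
    #{p ∈ (descCubeQuads P Z).offDiag | cubeQuadKey p.1 = cubeQuadKey p.2} ≤
      ∑ m ∈ Z ×ˢ Z, 2 * #((m.2 : ℤ) - m.1).natAbs.divisors ^ 2 := by
  set E := {p ∈ (descCubeQuads P Z).offDiag | cubeQuadKey p.1 = cubeQuadKey p.2}
  have hE : ∀ p ∈ E, p.1 ∈ descCubeQuads P Z ∧ p.2 ∈ descCubeQuads P Z ∧ p.1 ≠ p.2 ∧
      cubeQuadKey p.1 = cubeQuadKey p.2 := by
    intro p hp
    simpa only [E, mem_filter, mem_offDiag, and_assoc] using hp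
  have hmaps : ∀ p ∈ E, (p.1.2.2.2, p.2.2.2.2) ∈ Z ×ˢ Z := by
    intro p hp
    obtain ⟨h1, h2, -⟩ := hE p hp
    simp only [descCubeQuads, mem_filter, mem_cubeQuads] at h1 h2
    exact mem_product.2 ⟨h1.1.2.2.2.1, h2.1.2.2.2.1⟩
  rw [card_eq_sum_card_fiberwise hmaps]
  refine sum_le_sum fun m _ => ?_
  -- a pair over `(m, m')` is determined by the common difference `h` of its two
  -- quadruples and by their second entries `x, x'`
  let code : (ℕ × ℕ × ℕ × ℕ) × (ℕ × ℕ × ℕ × ℕ) → ℕ × ℕ × ℕ := fun p =>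
    ((cubeQuadKey p.1).1, p.1.2.1, p.2.2.1)
  have hinj : Set.InjOn code ({p ∈ E | (p.1.2.2.2, p.2.2.2.2) = m} : Finset _) := by
    intro p hp q hq hpq
    obtain ⟨hpE, hpm⟩ := mem_filter.1 hp
    obtain ⟨hqE, hqm⟩ := mem_filter.1 hq
    obtain ⟨hp1, hp2, -, hpkey⟩ := hE p hpE
    obtain ⟨hq1, hq2, -, hqkey⟩ := hE q hqE
    simp only [code, cubeQuadKey, Prod.mk.injEq] at hpq hpkey hqkey
    rw [← hqm, Prod.mk.injEq] at hpm
    simp only [descCubeQuads, mem_filter] at hp1 hp2 hq1 hq2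
    exact Prod.ext (eq_of_mem_cubeQuads hp1.1 hq1.1 (by omega) hpq.2.1 (.inr hpm.1))
      (eq_of_mem_cubeQuads hp2.1 hq2.1 (by omega) hpq.2.2 (.inr hpm.2))
  refine (card_image_of_injOn hinj).symm.le.trans
    (card_le_two_mul_card_divisors_sq _ fun c hc => ?_)
  obtain ⟨p, hp, rfl⟩ := mem_image.1 hc
  obtain ⟨hpE, rfl⟩ := mem_filter.1 hp
  obtain ⟨hp1, hp2, hne, hkey⟩ := hE p hpE
  have hx : p.1.2.1 ≠ p.2.2.1 := fun hx => hne (eq_of_cubeQuadKey_eq hp1 hp2 hkey hx)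
  have hh : (cubeQuadKey p.1).1 ≠ 0 := by
    simp only [descCubeQuads, mem_filter, cubeQuadKey] at hp1 ⊢
    omega
  exact ⟨hh, hx, (sub_eq_of_cubeQuadKey_eq hp1 hp2 hkey).symm⟩

end descCubeQuads

theorem card_cubeQuads_le_of_card_divisors_le (P : ℕ) (Z : Finset ℕ) {K : ℝ} (hK0 : 0 ≤ K)
    (hK : ∀ m ∈ Z, ∀ m' ∈ Z, (#((m' : ℤ) - m).natAbs.divisors : ℝ) ≤ K) :
    (#(cubeQuads P Z) : ℝ) ≤ 3 * (P * #Z) + 2 * (√2 * K * (√P * (#Z : ℝ) ^ (3 / 2 : ℝ))) := by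
  set u := #(descCubeQuads P Z)
  set w := #{p ∈ (descCubeQuads P Z).offDiag | cubeQuadKey p.1 = cubeQuadKey p.2}
  have hT : (#(cubeQuads P Z) : ℝ) ≤ P * #Z + 2 * u := by
    exact_mod_cast card_cubeQuads_le P Z
  have hu : (u : ℝ) ^ 2 ≤ (P * #Z) * (u + w) := by
    exact_mod_cast card_descCubeQuads_sq_le P Z
  have hw : (w : ℝ) ≤ 2 * #Z ^ 2 * K ^ 2 := by
    calc (w : ℝ) ≤ ∑ m ∈ Z ×ˢ Z, 2 * (#((m.2 : ℤ) - m.1).natAbs.divisors : ℝ) ^ 2 := by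
          exact_mod_cast card_offDiag_sameKey_le P Z
      _ ≤ ∑ m ∈ Z ×ˢ Z, 2 * K ^ 2 := by
          refine sum_le_sum fun m hm => ?_
          obtain ⟨hm1, hm2⟩ := mem_product.1 hm
          gcongr
          exact hK _ hm1 _ hm2
      _ = 2 * #Z ^ 2 * K ^ 2 := by simp [card_product]; ring
  have hc : (P * #Z : ℝ) * w ≤ (√2 * K * (√P * (#Z : ℝ) ^ (3 / 2 : ℝ))) ^ 2 := by
    have hZ : ((#Z : ℝ) ^ (3 / 2 : ℝ)) ^ 2 = #Z ^ 3 := by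
      rw [← Real.rpow_mul_natCast (by positivity)]; norm_num
    rw [mul_pow, mul_pow, mul_pow, hZ, Real.sq_sqrt zero_le_two, Real.sq_sqrt P.cast_nonneg]
    calc (P * #Z : ℝ) * w ≤ P * #Z * (2 * #Z ^ 2 * K ^ 2) := by gcongr
      _ = 2 * K ^ 2 * (P * #Z ^ 3) := by ring
  have := le_add_of_sq_le_mul_add (by positivity) (by positivity) hu hc
  linarith

/-- Davenport's bound for cubes: with `P = N^{1/3}` and `Z ⊆ (0,N]`,
`Σ_m Q(m)² ≪ P·|Z| + P^{1/2+ε}·|Z|^{3/2}`, where `Q(m)` counts pairs `(x, n)` with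
`1 ≤ x ≤ P`, `n ∈ Z` and `x³ + n = m`; the left side counts quadruples
`(x₁, x₂, n₁, n₂)` with `x₁³ + n₁ = x₂³ + n₂`. -/
theorem stmt_19 :
    ∀ ε : ℝ, 0 < ε → ∃ C : ℝ, 0 < C ∧ ∀ N : ℕ, 1 ≤ N → ∀ Z : Finset ℕ,
      ↑Z ⊆ Set.Ioc 0 N →
      ({t : ℕ × ℕ × ℕ × ℕ | 1 ≤ t.1 ∧ (t.1 : ℝ) ≤ (N : ℝ) ^ ((1 : ℝ) / 3) ∧
          1 ≤ t.2.1 ∧ (t.2.1 : ℝ) ≤ (N : ℝ) ^ ((1 : ℝ) / 3) ∧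
          t.2.2.1 ∈ Z ∧ t.2.2.2 ∈ Z ∧
          t.1 ^ 3 + t.2.2.1 = t.2.1 ^ 3 + t.2.2.2}.ncard : ℝ)
        ≤ C * ((N : ℝ) ^ ((1 : ℝ) / 3) * Z.card +
            ((N : ℝ) ^ ((1 : ℝ) / 3)) ^ ((1 : ℝ) / 2 + ε) * (Z.card : ℝ) ^ ((3 : ℝ) / 2)) := by
  intro ε hε
  obtain ⟨C, hC, hτ⟩ := Nat.exists_card_divisors_le_rpow (ε := 1 / 3 * ε) (by positivity)
  refine ⟨3 + 2 * √2 * C, by positivity, fun N _ Z hZ => ?_⟩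
  set P := (N : ℝ) ^ ((1 : ℝ) / 3)
  have hP : 0 ≤ P := by positivity
  rw [← coe_cubeQuads_floor Z hP, Set.ncard_coe_finset]
  have hK : ∀ m ∈ Z, ∀ m' ∈ Z, (#((m' : ℤ) - m).natAbs.divisors : ℝ) ≤ C * P ^ ε := by
    intro m hm m' hm'
    have hdiff : ((m' : ℤ) - m).natAbs ≤ N := by
      have hmN := hZ hm
      have hm'N := hZ hm'
      simp only [Set.mem_Ioc] at hmN hm'N
      omega
    calc (#((m' : ℤ) - m).natAbs.divisors : ℝ) ≤ C * ((m' : ℤ) - m).natAbs ^ (1 / 3 * ε) := hτ _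
      _ ≤ C * (N : ℝ) ^ (1 / 3 * ε) := by gcongr
      _ = C * P ^ ε := by rw [Real.rpow_mul N.cast_nonneg]
  have hB : P ^ (1 / 2 + ε) = √P * P ^ ε := by
    rw [Real.rpow_add' hP (by positivity), Real.sqrt_eq_rpow]
  grw [card_cubeQuads_le_of_card_divisors_le _ Z (by positivity) hK, Nat.floor_le hP, hB]
  have : 0 ≤ √2 * C * (P * #Z) := by positivity
  have : 0 ≤ √P * P ^ ε * (#Z : ℝ) ^ (3 / 2 : ℝ) := by positivity
  linarith
end
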